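/- Let b be a prime, let m ≥ 1, s ≥ 1 and t be integers with 0 ≤ t ≤ m, and let C_1, …, C_s be m×m matrices over 𝔽_b with ρ_m(C_1,…,C_s) ≥ m − t. Let 0 = w_1 ≤ w_2 ≤ ⋯ ≤ w_s be nonnegative integers with w_s ≤ t, and let C̃_1, …, C̃_s be the corresponding row reduced matrices. Then ρ_m(C̃_1,…,C̃_s) ≥ m − t. -/

import Mathlib

/-!
Since every `w_j ≤ w_s ≤ t`, the first `m - t` rows of `C̃_j` are those of `C_j`. A row system
of total size `m - t` therefore involves the same vectors for the `C̃_j` as for the `C_j`, and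
for the `C_j` it is independent because `m - t ≤ ρ_m(C_1,…,C_s)` and totals below `ρ` are
admissible: pad the system to total `ρ` and pass to a subfamily.
-/


open scoped BigOperators

/-- Linear independence of the system consisting of the first `d j` rows of each matrix `C j`. -/
def rowsLinIndep (b m : ℕ) {ι : Type*} (C : ι → Matrix (Fin m) (Fin m) (ZMod b))
    (d : ι → ℕ) : Prop :=
  LinearIndependent (ZMod b)
    (fun p : {p : ι × Fin m // (p.2 : ℕ) < d p.1} => C p.1.1 p.1.2)

/-- The linear independence parameter `ρ_m(C_1,…,C_s)`: the largest `d ∈ {0,…,m}` such that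
for every choice of nonnegative integers `d_j` summing to `d`, the collection of the first `d_j`
rows of the matrices is linearly independent. -/
noncomputable def rho (b m : ℕ) {ι : Type*} [Fintype ι]
    (C : ι → Matrix (Fin m) (Fin m) (ZMod b)) : ℕ :=
  sSup {d | d ≤ m ∧ ∀ dv : ι → ℕ, (∑ j, dv j) = d → rowsLinIndep b m C dv}

/-- Row reduced matrix: the last `min m w` rows are set to zero. -/
def rowReduced {b m : ℕ} (C : Matrix (Fin m) (Fin m) (ZMod b)) (w : ℕ) :
    Matrix (Fin m) (Fin m) (ZMod b) :=
  Matrix.of fun i r => if (i : ℕ) < m - min m w then C i r else 0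

/-- Column-row reduced matrix: the last `min m w` rows and columns are set to zero. -/
def colRowReduced {b m : ℕ} (C : Matrix (Fin m) (Fin m) (ZMod b)) (w : ℕ) :
    Matrix (Fin m) (Fin m) (ZMod b) :=
  Matrix.of fun i r => if (i : ℕ) < m - min m w ∧ (r : ℕ) < m - min m w then C i r else 0

/-- Reduced matrix with possibly different row/column reduction indices. -/
def colRowReduced' {b m : ℕ} (C : Matrix (Fin m) (Fin m) (ZMod b)) (wr wc : ℕ) :
    Matrix (Fin m) (Fin m) (ZMod b) :=
  Matrix.of fun i r => if (i : ℕ) < m - min m wr ∧ (r : ℕ) < m - min m wc then C i r else 0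

/-- Upper-left `m × m` submatrix of an infinite matrix. -/
def upperLeft {b : ℕ} (C : Matrix ℕ ℕ (ZMod b)) (m : ℕ) : Matrix (Fin m) (Fin m) (ZMod b) :=
  Matrix.of fun i r => C (i : ℕ) (r : ℕ)

/-- The `k`-th coordinate value produced by the digital method with generating matrix `C`. -/
noncomputable def digitalPoint (b m : ℕ) (C : Matrix (Fin m) (Fin m) (ZMod b)) (k : ℕ) : ℝ :=
  ∑ i : Fin m,
    ((C.mulVec fun r : Fin m => ((k / b ^ (r : ℕ)) % b : ZMod b)) i).val
      / (b : ℝ) ^ ((i : ℕ) + 1)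

open Classical in
/-- The `b^m` points `P 0, …, P (b^m - 1)` form a `(t,m,|ι|)`-net in base `b` (counted with
multiplicity): every elementary interval of volume `b^(t-m)` contains exactly `b^t` points. -/
def isNet (b m t : ℕ) {ι : Type*} [Fintype ι] (P : ℕ → ι → ℝ) : Prop :=
  ∀ d a : ι → ℕ, (∀ j, a j < b ^ d j) → (∑ j, d j) = m - t →
    ((Finset.range (b ^ m)).filter fun k =>
        ∀ j, (a j : ℝ) / (b : ℝ) ^ d j ≤ P k j ∧ P k j < ((a j : ℝ) + 1) / (b : ℝ) ^ d j).card
      = b ^ t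

section LinearIndependenceParameter

variable {b m : ℕ} {ι : Type*} (C : ι → Matrix (Fin m) (Fin m) (ZMod b))

lemma rowsLinIndep_mono {dv dv' : ι → ℕ} (h : dv ≤ dv') (H : rowsLinIndep b m C dv') :
    rowsLinIndep b m C dv :=
  H.comp (fun q : {p : ι × Fin m // (p.2 : ℕ) < dv p.1} => ⟨q.1, q.2.trans_le (h q.1.1)⟩)
    fun _ _ hq => Subtype.ext (congrArg Subtype.val hq :)

lemma rowsLinIndep_of_isEmpty (dv : ι → ℕ)
    [IsEmpty {p : ι × Fin m // (p.2 : ℕ) < dv p.1}] : rowsLinIndep b m C dv :=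
  linearIndependent_empty_type

lemma rowsLinIndep_zero : rowsLinIndep b m C 0 :=
  have : IsEmpty {p : ι × Fin m // (p.2 : ℕ) < (0 : ι → ℕ) p.1} :=
    ⟨fun p => Nat.not_lt_zero _ p.2⟩
  rowsLinIndep_of_isEmpty C 0

variable [Fintype ι]

lemma le_rho {d : ℕ} (hd : d ≤ m) (H : ∀ dv : ι → ℕ, ∑ j, dv j = d → rowsLinIndep b m C dv) :
    d ≤ rho b m C :=
  le_csSup ⟨m, fun _ hd' => hd'.1⟩ ⟨hd, H⟩

lemma rowsLinIndep_of_sum_eq_rho {dv : ι → ℕ} (h : ∑ j, dv j = rho b m C) :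
    rowsLinIndep b m C dv := by
  have hzero : 0 ∈ {d | d ≤ m ∧ ∀ dv : ι → ℕ, ∑ j, dv j = d → rowsLinIndep b m C dv} := by
    refine ⟨Nat.zero_le m, fun dv hdv => ?_⟩
    obtain rfl : dv = 0 := funext fun j => Finset.sum_eq_zero_iff.mp hdv j (Finset.mem_univ j)
    exact rowsLinIndep_zero C
  exact (Nat.sSup_mem ⟨0, hzero⟩ ⟨m, fun _ hd => hd.1⟩).2 dv h

lemma rowsLinIndep_of_sum_le_rho {dv : ι → ℕ} (h : ∑ j, dv j ≤ rho b m C) :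
    rowsLinIndep b m C dv := by
  rcases isEmpty_or_nonempty ι with _ | ⟨⟨j₀⟩⟩
  · exact rowsLinIndep_of_isEmpty C dv
  · classical
    refine rowsLinIndep_mono C (fun j => Nat.le_add_right (dv j) _)
      (rowsLinIndep_of_sum_eq_rho C (dv := dv + Pi.single j₀ (rho b m C - ∑ j, dv j)) ?_)
    rw [Pi.add_def, Finset.sum_add_distrib, Finset.sum_pi_single']
    simp only [Finset.mem_univ, if_true]
    omega

end LinearIndependenceParameter

lemma rowReduced_apply_of_lt {b m : ℕ} (C : Matrix (Fin m) (Fin m) (ZMod b)) (w : ℕ) {i : Fin m}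
    (hi : (i : ℕ) < m - w) : rowReduced C w i = C i := by
  ext r
  have hi' : (i : ℕ) < m - min m w := hi.trans_le (Nat.sub_le_sub_left (min_le_right m w) m)
  simp only [rowReduced, Matrix.of_apply, if_pos hi']

lemma rowsLinIndep_rowReduced_iff {b m : ℕ} {ι : Type*} (C : ι → Matrix (Fin m) (Fin m) (ZMod b))
    (w dv : ι → ℕ) (h : ∀ j, dv j ≤ m - w j) :
    rowsLinIndep b m (fun j => rowReduced (C j) (w j)) dv ↔ rowsLinIndep b m C dv := by
  unfold rowsLinIndep
  rw [show (fun p : {p : ι × Fin m // (p.2 : ℕ) < dv p.1} => rowReduced (C p.1.1) (w p.1.1) p.1.2)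
      = fun p => C p.1.1 p.1.2 from
    funext fun p => rowReduced_apply_of_lt _ _ (p.2.trans_le (h _))]

/-- if `w_s ≤ t`, then the row reduced matrices satisfy
`ρ_m(C̃_1,…,C̃_s) ≥ m − t`. -/
theorem rho_rowReduced_ge_of_ws_le (b m s t : ℕ) (hs : 1 ≤ s)
    (C : Fin s → Matrix (Fin m) (Fin m) (ZMod b))
    (hrho : m - t ≤ rho b m C)
    (w : Fin s → ℕ) (hwmono : Monotone w)
    (hws : w ⟨s - 1, by omega⟩ ≤ t) :
    m - t ≤ rho b m (fun j => rowReduced (C j) (w j)) := by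
  have hw : ∀ j, w j ≤ t := fun j => (hwmono (Fin.mk_le_mk.mpr (by omega))).trans hws
  refine le_rho _ (Nat.sub_le m t) fun dv hsum => ?_
  have hdv : ∀ j, dv j ≤ m - w j := fun j =>
    (hsum ▸ Finset.single_le_sum (fun j _ => Nat.zero_le (dv j)) (Finset.mem_univ j)).trans
      (Nat.sub_le_sub_left (hw j) m)
  exact (rowsLinIndep_rowReduced_iff C w dv hdv).mpr
    (rowsLinIndep_of_sum_le_rho C (hsum.trans_le hrho))
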